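/- If the pilot estimate equals the full-data least-squares solution, β₀ = β̂_n, and not all vectors e_i·x_i are zero (with e_i = y_i − x_iᵀβ̂_n, and e_i ≠ 0, x_i ≠ 0 for all i so the probabilities are well defined and positive), then the gradient-based sampling probabilities π_i⁰ = ‖x_i‖·|y_i − x_iᵀβ₀| / Σ_j ‖x_j‖·|y_j − x_jᵀβ₀| coincide with the optimal probabilities π_i^e = ‖x_i‖·|e_i|/Σ_j‖x_j‖·|e_j|, and consequently σ_b²(π⁰) = min over probability vectors π with positive entries of σ_b²(π) = ( (1/n)·Σ_i ‖x_i‖·|e_i| )², where σ_b²(π) = (1/n²)·Σ_i π_i⁻¹·‖x_i‖²·e_i². -/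

import Mathlib

/-!
With `β₀ = β̂_n` the pilot residuals are the `e_i`, so `π⁰ = πᵉ`. Writing `a_i = ‖x_i‖ |e_i|`, we have
`n² σ_b²(π) = ∑ a_i² / π_i`, which by Sedrakyan's form of Cauchy–Schwarz is at least
`(∑ a_i)² / ∑ π_i = (∑ a_i)²`, with equality at `π ∝ a`.
-/

open Matrix Finset

/-- Euclidean norm of a vector in ℝ^d. -/
noncomputable def euclNorm {d : ℕ} (v : Fin d → ℝ) : ℝ := Real.sqrt (∑ i, v i ^ 2)

lemma euclNorm_sq {d : ℕ} (v : Fin d → ℝ) : euclNorm v ^ 2 = ∑ i, v i ^ 2 :=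
  Real.sq_sqrt (sum_nonneg fun _ _ => sq_nonneg _)

-- No positivity is needed: with `x / 0 = 0`, a vanishing `a i` or sum contributes `0` on both sides.
lemma sum_sq_div_normalized {ι K : Type*} [Field K] (s : Finset ι) (a : ι → K) :
    ∑ i ∈ s, a i ^ 2 / (a i / ∑ j ∈ s, a j) = (∑ i ∈ s, a i) ^ 2 := by
  have hterm : ∀ i ∈ s, a i ^ 2 / (a i / ∑ j ∈ s, a j) = a i * ∑ j ∈ s, a j := by
    intro i _
    rcases eq_or_ne (a i) 0 with hai | hai
    · simp [hai]
    · rw [div_div_eq_mul_div, sq, mul_assoc, mul_div_cancel_left₀ _ hai]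
  rw [sum_congr rfl hterm, ← sum_mul, sq]

theorem stmt18_general {n d : ℕ}
    (x : Fin n → Fin d → ℝ) (y : Fin n → ℝ)
    (βhat : Fin d → ℝ)
    (e : Fin n → ℝ) (he : ∀ i, e i = y i - ∑ k, x i k * βhat k)
    (β₀ : Fin d → ℝ) (hβ₀ : β₀ = βhat)
    (sb2 : (Fin n → ℝ) → ℝ)
    (hsb2 : ∀ w, sb2 w = ((n : ℝ) ^ 2)⁻¹ * ∑ i, (w i)⁻¹ * (∑ k, x i k ^ 2) * e i ^ 2)
    (π0 : Fin n → ℝ)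
    (hπ0 : ∀ i, π0 i =
      euclNorm (x i) * |y i - ∑ k, x i k * β₀ k| /
        ∑ j, euclNorm (x j) * |y j - ∑ k, x j k * β₀ k|)
    (πe : Fin n → ℝ)
    (hπe : ∀ i, πe i = euclNorm (x i) * |e i| / ∑ j, euclNorm (x j) * |e j|) :
    (∀ i, π0 i = πe i) ∧
      sb2 π0 = ((n : ℝ)⁻¹ * ∑ i, euclNorm (x i) * |e i|) ^ 2 ∧
      (∀ w : Fin n → ℝ, (∀ i, 0 < w i) → (∑ i, w i) = 1 → sb2 π0 ≤ sb2 w) := by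
  have hπ0e : ∀ i, π0 i = πe i := fun i => by simp only [hπ0, hπe, hβ₀, ← he]
  obtain ⟨a, ha⟩ : ∃ a : Fin n → ℝ, ∀ i, a i = euclNorm (x i) * |e i| := ⟨_, fun _ => rfl⟩
  simp only [← ha] at hπe ⊢
  have hsb2a : ∀ w, sb2 w = ((n : ℝ) ^ 2)⁻¹ * ∑ i, a i ^ 2 / w i := fun w => by
    simp only [hsb2, ha, mul_pow, euclNorm_sq, sq_abs]
    exact congrArg _ (sum_congr rfl fun i _ => by ring)
  have hσ : sb2 π0 = ((n : ℝ)⁻¹ * ∑ i, a i) ^ 2 := by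
    simp only [hsb2a, hπ0e, hπe, sum_sq_div_normalized, mul_pow, inv_pow]
  refine ⟨hπ0e, hσ, fun w hw hw1 => ?_⟩
  rw [hσ, hsb2a, mul_pow, inv_pow]
  gcongr
  simpa [hw1] using sq_sum_div_le_sum_sq_div univ a fun i _ => hw i

/-- exact case of Corollary 1: if the pilot estimate equals the full-data
least-squares solution, `β₀ = β̂_n`, then the gradient-based sampling probabilities `π⁰`
coincide with the optimal probabilities `π^e`, and `σ_b²(π⁰)` equals the minimum
`((1/n)Σ_i ‖x_i‖|e_i|)²` of `σ_b²(π)` over probability vectors with positive entries. -/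
theorem stmt18 {n d : ℕ} (hn : 1 ≤ n) (hd : 1 ≤ d)
    (x : Fin n → Fin d → ℝ) (y : Fin n → ℝ)
    (Sn : Matrix (Fin d) (Fin d) ℝ)
    (hSn : Sn = (n : ℝ)⁻¹ • ∑ i, vecMulVec (x i) (x i))
    (hpd : Sn.PosDef)
    (βhat : Fin d → ℝ) (hβ : βhat = Sn⁻¹ *ᵥ ((n : ℝ)⁻¹ • ∑ i, y i • x i))
    (e : Fin n → ℝ) (he : ∀ i, e i = y i - ∑ k, x i k * βhat k)
    (he0 : ∀ i, e i ≠ 0) (hx0 : ∀ i, x i ≠ 0)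
    (β₀ : Fin d → ℝ) (hβ₀ : β₀ = βhat)
    (sb2 : (Fin n → ℝ) → ℝ)
    (hsb2 : ∀ w, sb2 w = ((n : ℝ) ^ 2)⁻¹ * ∑ i, (w i)⁻¹ * (∑ k, x i k ^ 2) * e i ^ 2)
    (π0 : Fin n → ℝ)
    (hπ0 : ∀ i, π0 i =
      euclNorm (x i) * |y i - ∑ k, x i k * β₀ k| /
        ∑ j, euclNorm (x j) * |y j - ∑ k, x j k * β₀ k|)
    (πe : Fin n → ℝ)
    (hπe : ∀ i, πe i = euclNorm (x i) * |e i| / ∑ j, euclNorm (x j) * |e j|) :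
    (∀ i, π0 i = πe i) ∧
      sb2 π0 = ((n : ℝ)⁻¹ * ∑ i, euclNorm (x i) * |e i|) ^ 2 ∧
      (∀ w : Fin n → ℝ, (∀ i, 0 < w i) → (∑ i, w i) = 1 → sb2 π0 ≤ sb2 w) :=
  stmt18_general x y βhat e he β₀ hβ₀ sb2 hsb2 π0 hπ0 πe hπe
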